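/- arXiv:2007.07515 — 6 statements merged into one kernel-verified Lean document; each statement's English description precedes it below -/
import Mathlib

section
/- The function C*_∞ : [0,1]^K → ℝ defined by C*_∞(y) = min_{α ∈ Δ(K)} ‖α ⊙ y‖_∞ is concave on [0,1]^K. -/
/-!
For `y ≥ 0`, `min_{α ∈ Δ} max_i α_i y_i = min_{w ∈ Δ} ∑ w_i² y_i`: taking `w = α` gives
`∑ α_i² y_i ≤ max_i α_i y_i`, and conversely `α ∝ y⁻¹` equalises the `α_i y_i` at
`(∑ y_i⁻¹)⁻¹`, which by Cauchy–Schwarz is at most every `∑ w_i² y_i` (if some `y_i = 0`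
both sides vanish). The right-hand side is an infimum of linear functions of `y`, hence concave.
-/

open Finset

theorem ConcaveOn.sInf_image {E A : Type*} [AddCommMonoid E] [Module ℝ E] {s : Set E}
    {S : Set A} {f : A → E → ℝ} (hS : S.Nonempty) (hf : ∀ a ∈ S, ConcaveOn ℝ s (f a))
    (hbdd : ∀ x ∈ s, BddBelow ((f · x) '' S)) :
    ConcaveOn ℝ s (fun x => sInf ((f · x) '' S)) := by
  refine ⟨(hf _ hS.some_mem).1, fun x hx y hy a b ha hb hab => ?_⟩
  refine le_csInf (hS.image _) ?_
  rintro _ ⟨α, hα, rfl⟩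
  calc a • sInf ((f · x) '' S) + b • sInf ((f · y) '' S)
      ≤ a • f α x + b • f α y := by
        gcongr
        · exact csInf_le (hbdd x hx) ⟨α, hα, rfl⟩
        · exact csInf_le (hbdd y hy) ⟨α, hα, rfl⟩
    _ ≤ f α (a • x + b • y) := (hf α hα).2 hx hy ha hb hab

variable {ι : Type*} [Fintype ι]

theorem concaveOn_sum_sq_mul (s : Set (ι → ℝ)) (hs : Convex ℝ s) (w : ι → ℝ) :
    ConcaveOn ℝ s (fun y => ∑ i, w i ^ 2 * y i) :=
  ⟨hs, fun x _ y _ a b _ _ _ => le_of_eq <| by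
    simp only [Pi.add_apply, Pi.smul_apply, smul_eq_mul, mul_sum, ← sum_add_distrib]
    exact sum_congr rfl fun i _ => by ring⟩

theorem bddBelow_image_sum_sq_mul {y : ι → ℝ} (hy : 0 ≤ y) (S : Set (ι → ℝ)) :
    BddBelow ((fun w => ∑ i, w i ^ 2 * y i) '' S) := by
  refine ⟨0, ?_⟩
  rintro _ ⟨w, -, rfl⟩
  exact sum_nonneg fun i _ => mul_nonneg (sq_nonneg _) (hy i)

theorem sum_sq_mul_le_iSup_abs_mul {α y : ι → ℝ} (hα : α ∈ stdSimplex ℝ ι) :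
    ∑ i, α i ^ 2 * y i ≤ ⨆ i, |α i * y i| := by
  have hle : ∀ i, α i * y i ≤ ⨆ i, |α i * y i| := fun i =>
    (le_abs_self _).trans (le_ciSup (f := fun i => |α i * y i|) (Set.finite_range _).bddAbove i)
  calc ∑ i, α i ^ 2 * y i = ∑ i, α i * (α i * y i) := sum_congr rfl fun i _ => by ring
    _ ≤ ∑ i, α i * ⨆ i, |α i * y i| :=
        sum_le_sum fun i _ => mul_le_mul_of_nonneg_left (hle i) (hα.1 i)
    _ = ⨆ i, |α i * y i| := by rw [← sum_mul, hα.2, one_mul]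

theorem exists_mem_stdSimplex_iSup_abs_mul_le {w y : ι → ℝ} (hw : w ∈ stdSimplex ℝ ι)
    (hy : 0 ≤ y) : ∃ α ∈ stdSimplex ℝ ι, ⨆ i, |α i * y i| ≤ ∑ i, w i ^ 2 * y i := by
  have hq : 0 ≤ ∑ i, w i ^ 2 * y i := sum_nonneg fun i _ => mul_nonneg (sq_nonneg _) (hy i)
  by_cases hpos : ∀ i, 0 < y i
  · set T := ∑ i, (y i)⁻¹
    have hT : 0 < T := sum_pos (fun i _ => inv_pos.2 (hpos i))
      (nonempty_of_sum_ne_zero (hw.2 ▸ one_ne_zero))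
    refine ⟨fun i => (y i)⁻¹ / T, ⟨fun i => by have := hpos i; positivity, ?_⟩, ?_⟩
    · rw [← sum_div, div_self hT.ne']
    -- Sedrakyan's lemma, i.e. Cauchy–Schwarz for `w / √y⁻¹` and `√y⁻¹`
    have hCS : T⁻¹ ≤ ∑ i, w i ^ 2 * y i := by
      simpa [hw.2, div_inv_eq_mul] using
        sq_sum_div_le_sum_sq_div univ w (g := fun i => (y i)⁻¹) fun i _ => inv_pos.2 (hpos i)
    refine Real.iSup_le (fun i => ?_) hq
    rw [div_mul_eq_mul_div, inv_mul_cancel₀ (hpos i).ne', abs_of_pos (by positivity), one_div]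
    exact hCS
  · classical
    push Not at hpos
    obtain ⟨j, hj⟩ := hpos
    refine ⟨Pi.single j 1, single_mem_stdSimplex ℝ j, Real.iSup_le (fun i => ?_) hq⟩
    rcases eq_or_ne i j with rfl | hij
    · simp [le_antisymm hj (hy i), hq]
    · simp [hij, hq]

theorem sInf_iSup_abs_mul_eq_sInf_sum_sq_mul [Nonempty ι] {y : ι → ℝ} (hy : 0 ≤ y) :
    sInf ((fun α => ⨆ i, |α i * y i|) '' stdSimplex ℝ ι) =
      sInf ((fun w => ∑ i, w i ^ 2 * y i) '' stdSimplex ℝ ι) := by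
  have hΔ : (stdSimplex ℝ ι).Nonempty := Set.nonempty_coe_sort.mp inferInstance
  refine le_antisymm (le_csInf (hΔ.image _) ?_) (le_csInf (hΔ.image _) ?_)
  · rintro _ ⟨w, hw, rfl⟩
    obtain ⟨α, hα, hle⟩ := exists_mem_stdSimplex_iSup_abs_mul_le hw hy
    refine csInf_le_of_le ⟨0, ?_⟩ ⟨α, hα, rfl⟩ hle
    rintro _ ⟨β, -, rfl⟩
    exact Real.iSup_nonneg fun i => abs_nonneg _
  · rintro _ ⟨α, hα, rfl⟩
    exact csInf_le_of_le (bddBelow_image_sum_sq_mul hy _) ⟨α, hα, rfl⟩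
      (sum_sq_mul_le_iSup_abs_mul hα)

theorem concaveOn_sInf_sum_sq_mul [Nonempty ι] :
    ConcaveOn ℝ (Set.Ici 0)
      (fun y : ι → ℝ => sInf ((fun w => ∑ i, w i ^ 2 * y i) '' stdSimplex ℝ ι)) := by
  have hΔ : (stdSimplex ℝ ι).Nonempty := Set.nonempty_coe_sort.mp inferInstance
  exact ConcaveOn.sInf_image hΔ (fun w _ => concaveOn_sum_sq_mul _ (convex_Ici 0) w)
    fun y hy => bddBelow_image_sum_sq_mul hy _

/-- `C*_∞(y) = min_{α ∈ Δ(K)} ‖α ⊙ y‖_∞` is concave on `[0,1]^K`. -/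
theorem stmt_3 (K : ℕ) (hK : 0 < K) :
    ConcaveOn ℝ {y : Fin K → ℝ | ∀ i, y i ∈ Set.Icc (0:ℝ) 1}
      (fun y => sInf ((fun α : Fin K → ℝ => ⨆ i, |α i * y i|) '' stdSimplex ℝ (Fin K))) := by
  have : Nonempty (Fin K) := ⟨⟨0, hK⟩⟩
  have hsub : {y : Fin K → ℝ | ∀ i, y i ∈ Set.Icc (0:ℝ) 1} ⊆ Set.Ici 0 := fun y hy i => (hy i).1
  have hconv : Convex ℝ {y : Fin K → ℝ | ∀ i, y i ∈ Set.Icc (0:ℝ) 1} := by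
    simpa [Set.pi] using convex_pi (s := Set.univ) fun i _ => convex_Icc (0:ℝ) 1
  exact (concaveOn_sInf_sum_sq_mul.subset hsub hconv).congr fun y hy =>
    (sInf_iSup_abs_mul_eq_sInf_sum_sq_mul (hsub hy)).symm
end

section
/- For each p ≥ 1, the function C*_p : [0,1]^K → ℝ defined by C*_p(y) = min_{α ∈ Δ(K)} ‖α ⊙ y‖_p is concave. -/
/-!
`C*_p = minWeightedNorm p` is positively homogeneous, so it suffices to show superadditivity on
the nonnegative orthant: `C*_p(x) + C*_p(z) ≤ ‖γ ⊙ (x + z)‖_p` for every `γ ∈ Δ(K)`. Put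
`w = x + z`. For `y > 0` the weights `α_i ∝ γ_i w_i / y_i` give
`C*_p(y) ≤ ‖γ ⊙ w‖_p / ∑ γ_i w_i / y_i`, and the weighted AM–HM inequality bounds the reciprocal
of that sum by `∑ γ_i y_i / w_i`. Taking `y = x` and `y = z`, the two bounds add up to
`‖γ ⊙ w‖_p ∑ γ_i = ‖γ ⊙ w‖_p`.
-/

open Finset

variable {ι : Type*} [Fintype ι]

noncomputable def pNorm (p : ℝ) (v : ι → ℝ) : ℝ := (∑ i, |v i| ^ p) ^ (1 / p)

noncomputable def minWeightedNorm (p : ℝ) (y : ι → ℝ) : ℝ :=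
  sInf ((fun α => pNorm p (α * y)) '' stdSimplex ℝ ι)

lemma pNorm_nonneg (p : ℝ) (v : ι → ℝ) : 0 ≤ pNorm p v := by
  unfold pNorm; positivity

lemma pNorm_smul {p : ℝ} (hp : p ≠ 0) {c : ℝ} (hc : 0 ≤ c) (v : ι → ℝ) :
    pNorm p (c • v) = c * pNorm p v := by
  have hterm (i : ι) : |(c • v) i| ^ p = c ^ p * |v i| ^ p := by
    rw [Pi.smul_apply, smul_eq_mul, abs_mul, abs_of_nonneg hc, Real.mul_rpow hc (abs_nonneg _)]
  simp only [pNorm, hterm, ← mul_sum]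
  rw [Real.mul_rpow (by positivity) (by positivity), ← Real.rpow_mul hc, mul_one_div_cancel hp,
    Real.rpow_one]

section minWeightedNorm

variable {p : ℝ} {y : ι → ℝ}

lemma minWeightedNorm_le {α : ι → ℝ} (hα : α ∈ stdSimplex ℝ ι) :
    minWeightedNorm p y ≤ pNorm p (α * y) :=
  csInf_le ⟨0, by rintro _ ⟨β, -, rfl⟩; exact pNorm_nonneg p _⟩ ⟨α, hα, rfl⟩

lemma le_minWeightedNorm [Nonempty ι] {c : ℝ} (h : ∀ α ∈ stdSimplex ℝ ι, c ≤ pNorm p (α * y)) :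
    c ≤ minWeightedNorm p y :=
  le_csInf ((isPathConnected_stdSimplex ι).nonempty.image _)
    (by rintro _ ⟨α, hα, rfl⟩; exact h α hα)

lemma minWeightedNorm_nonneg : 0 ≤ minWeightedNorm p y :=
  Real.sInf_nonneg (by rintro _ ⟨α, -, rfl⟩; exact pNorm_nonneg p _)

lemma minWeightedNorm_eq_zero_of_apply_eq_zero (hp : p ≠ 0) {j : ι}
    (hj : y j = 0) : minWeightedNorm p y = 0 := by
  classical
  refine le_antisymm ?_ minWeightedNorm_nonneg
  have hsingle : Pi.single j 1 * y = 0 := by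
    ext i
    rcases eq_or_ne i j with rfl | hij
    · simp [hj]
    · simp [hij]
  calc minWeightedNorm p y ≤ pNorm p (Pi.single j 1 * y) :=
        minWeightedNorm_le (single_mem_stdSimplex ℝ j)
    _ = 0 := by rw [hsingle]; simp [pNorm, Real.zero_rpow hp, hp]

lemma smul_minWeightedNorm_le [Nonempty ι] (hp : p ≠ 0) {c : ℝ} (hc : 0 ≤ c) :
    c • minWeightedNorm p y ≤ minWeightedNorm p (c • y) :=
  le_minWeightedNorm fun α hα => by
    rw [smul_eq_mul, mul_smul_comm, pNorm_smul hp hc]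
    exact mul_le_mul_of_nonneg_left (minWeightedNorm_le hα) hc

lemma one_le_sum_div_mul_sum_mul {γ t : ι → ℝ} (hγ : γ ∈ stdSimplex ℝ ι) (ht : ∀ i, 0 < t i) :
    1 ≤ (∑ i, γ i / t i) * ∑ i, γ i * t i := by
  have hcs := sum_sq_le_sum_mul_sum_of_sq_le_mul univ (r := γ)
    (fun i _ => div_nonneg (hγ.1 i) (ht i).le) (fun i _ => mul_nonneg (hγ.1 i) (ht i).le)
    (fun i _ => by field_simp [(ht i).ne']; rfl)
  simpa [hγ.2] using hcs

lemma minWeightedNorm_mul_sum_div_le (hp : p ≠ 0) (hy : ∀ i, 0 < y i) {β : ι → ℝ} (hβ : 0 ≤ β) :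
    minWeightedNorm p y * ∑ i, β i / y i ≤ pNorm p β := by
  set N := ∑ i, β i / y i
  have hN : 0 ≤ N := sum_nonneg fun i _ => div_nonneg (hβ i) (hy i).le
  rcases hN.eq_or_lt with hN0 | hNpos
  · rw [← hN0, mul_zero]
    exact pNorm_nonneg p β
  have hα : N⁻¹ • (β / y) ∈ stdSimplex ℝ ι := by
    refine ⟨fun i => smul_nonneg (inv_nonneg.2 hN) (div_nonneg (hβ i) (hy i).le), ?_⟩
    simp only [Pi.smul_apply, Pi.div_apply, smul_eq_mul, ← mul_sum]
    exact inv_mul_cancel₀ hNpos.ne'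
  have hαy : N⁻¹ • (β / y) * y = N⁻¹ • β := by
    ext i
    simp only [Pi.mul_apply, Pi.smul_apply, Pi.div_apply, smul_eq_mul, mul_assoc,
      div_mul_cancel₀ _ (hy i).ne']
  calc minWeightedNorm p y * N ≤ pNorm p (N⁻¹ • β) * N := by
        rw [← hαy]
        exact mul_le_mul_of_nonneg_right (minWeightedNorm_le hα) hN
    _ = pNorm p β := by
        rw [pNorm_smul hp (inv_nonneg.2 hN), mul_comm N⁻¹, inv_mul_cancel_right₀ hNpos.ne']

lemma minWeightedNorm_le_pNorm_mul_sum (hp : p ≠ 0) {γ w : ι → ℝ} (hγ : γ ∈ stdSimplex ℝ ι)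
    (hy : 0 ≤ y) (hw : ∀ i, 0 < w i) :
    minWeightedNorm p y ≤ pNorm p (γ * w) * ∑ i, γ i * (y i / w i) := by
  have hsum_nonneg : 0 ≤ ∑ i, γ i * (y i / w i) :=
    sum_nonneg fun i _ => mul_nonneg (hγ.1 i) (div_nonneg (hy i) (hw i).le)
  by_cases hpos : ∀ i, 0 < y i
  · have hAMHM := one_le_sum_div_mul_sum_mul hγ fun i => div_pos (hpos i) (hw i)
    have hreparam := minWeightedNorm_mul_sum_div_le hp hpos
      (mul_nonneg (fun i => hγ.1 i) fun i => (hw i).le)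
    have hN : ∑ i, (γ * w) i / y i = ∑ i, γ i / (y i / w i) := by
      simp only [Pi.mul_apply, div_div_eq_mul_div]
    calc minWeightedNorm p y
        ≤ minWeightedNorm p y * ((∑ i, γ i / (y i / w i)) * ∑ i, γ i * (y i / w i)) :=
          le_mul_of_one_le_right minWeightedNorm_nonneg hAMHM
      _ = minWeightedNorm p y * (∑ i, (γ * w) i / y i) * ∑ i, γ i * (y i / w i) := by
          rw [hN, mul_assoc]
      _ ≤ pNorm p (γ * w) * ∑ i, γ i * (y i / w i) :=
          mul_le_mul_of_nonneg_right hreparam hsum_nonneg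
  · push Not at hpos
    obtain ⟨j, hj⟩ := hpos
    rw [minWeightedNorm_eq_zero_of_apply_eq_zero hp (le_antisymm hj (hy j))]
    exact mul_nonneg (pNorm_nonneg p _) hsum_nonneg

lemma minWeightedNorm_add_le_pNorm (hp : p ≠ 0) {γ x z : ι → ℝ} (hγ : γ ∈ stdSimplex ℝ ι)
    (hx : 0 ≤ x) (hz : 0 ≤ z) :
    minWeightedNorm p x + minWeightedNorm p z ≤ pNorm p (γ * (x + z)) := by
  by_cases hpos : ∀ i, 0 < (x + z) i
  · calc minWeightedNorm p x + minWeightedNorm p z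
        ≤ pNorm p (γ * (x + z)) * ∑ i, γ i * (x i / (x + z) i)
          + pNorm p (γ * (x + z)) * ∑ i, γ i * (z i / (x + z) i) :=
          add_le_add (minWeightedNorm_le_pNorm_mul_sum hp hγ hx hpos)
            (minWeightedNorm_le_pNorm_mul_sum hp hγ hz hpos)
      _ = pNorm p (γ * (x + z)) * ∑ i, γ i := by
          rw [← mul_add, ← sum_add_distrib]
          congr 1
          refine sum_congr rfl fun i _ => ?_
          rw [← mul_add, ← add_div, Pi.add_apply, div_self (a := x i + z i) (hpos i).ne', mul_one]
      _ = pNorm p (γ * (x + z)) := by rw [hγ.2, mul_one]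
  · push Not at hpos
    obtain ⟨j, hj⟩ := hpos
    rw [Pi.add_apply] at hj
    have hxj : x j = 0 := le_antisymm (by linarith [show 0 ≤ z j from hz j]) (hx j)
    have hzj : z j = 0 := le_antisymm (by linarith [show 0 ≤ x j from hx j]) (hz j)
    rw [minWeightedNorm_eq_zero_of_apply_eq_zero hp hxj,
      minWeightedNorm_eq_zero_of_apply_eq_zero hp hzj, add_zero]
    exact pNorm_nonneg p _

theorem concaveOn_minWeightedNorm [Nonempty ι] (hp : p ≠ 0) :
    ConcaveOn ℝ (Set.Ici 0) (minWeightedNorm (ι := ι) p) := by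
  refine ⟨convex_Ici 0, fun x hx z hz a b ha hb _ => le_minWeightedNorm fun γ hγ => ?_⟩
  calc a • minWeightedNorm p x + b • minWeightedNorm p z
      ≤ minWeightedNorm p (a • x) + minWeightedNorm p (b • z) :=
        add_le_add (smul_minWeightedNorm_le hp ha) (smul_minWeightedNorm_le hp hb)
    _ ≤ pNorm p (γ * (a • x + b • z)) :=
        minWeightedNorm_add_le_pNorm hp hγ (smul_nonneg ha hx) (smul_nonneg hb hz)

end minWeightedNorm

/-- For each `p ≥ 1`, `C*_p(y) = min_{α ∈ Δ(K)} ‖α ⊙ y‖_p` is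
concave on `[0,1]^K`, where `‖x‖_p = (∑_i |x_i|^p)^(1/p)`. -/
theorem stmt_4 (K : ℕ) (hK : 0 < K) (p : ℝ) (hp : 1 ≤ p) :
    ConcaveOn ℝ {y : Fin K → ℝ | ∀ i, y i ∈ Set.Icc (0:ℝ) 1}
      (fun y => sInf ((fun α : Fin K → ℝ =>
        (∑ i, |α i * y i| ^ p) ^ (1 / p)) '' stdSimplex ℝ (Fin K))) := by
  have : Nonempty (Fin K) := ⟨⟨0, hK⟩⟩
  have hbox : {y : Fin K → ℝ | ∀ i, y i ∈ Set.Icc (0:ℝ) 1} = Set.Icc 0 1 := by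
    ext y
    simp [Pi.le_def, forall_and]
  refine (concaveOn_minWeightedNorm (zero_lt_one.trans_le hp).ne').subset
    (fun y hy i => (hy i).1) ?_
  rw [hbox]
  exact convex_Icc 0 1
end

section
/- Suppose an algorithm for the vector-payoff game guarantees that the average payoff vector r̄_T = (1/T) ∑_{t=1}^T (α_t ⊙ l_t, l_t) satisfies min_{(x,y) ∈ S} (‖r̄_T,1 − x‖ + ‖r̄_T,2 − y‖) ≤ γ(T), where S = {(x,y) ∈ [0,1]^K × [0,1]^K : ‖x‖ ≤ C*(y)}. Then the load-balancing regret satisfies ‖∑_{t=1}^T α_t ⊙ l_t‖ − C*(∑_{t=1}^T l_t) ≤ T·γ(T). -/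
/-!
The target set is defined by `N x ≤ C*(y)`, so the only thing to control is how far `C*` can move
when `y` moves. Because `N` is monotone and every `β` in the simplex has coordinates in `[0, 1]`,
`C*` is `1`-Lipschitz for `N`. Hence the gap `N a - C*(b)` exceeds `N x - C*(y) ≤ 0` by at most
`N (a - x) + N (b - y)`, i.e. it is at most the distance of `(a, b)` to the target set. Applied to the
average payoff `(A / T, L / T)` and scaled by `T`, this is the regret bound.
-/

section LoadBalancing

variable {ι : Type*} [Fintype ι] {N C : (ι → ℝ) → ℝ}

lemma le_add_apply_sub_of_isLeast_weighted
    (htri : ∀ x y, N (x + y) ≤ N x + N y)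
    (hmono : ∀ x y : ι → ℝ, (∀ i, |x i| ≤ |y i|) → N x ≤ N y)
    (hC : ∀ y, IsLeast ((fun β : ι → ℝ => N (fun i => β i * y i)) '' stdSimplex ℝ ι) (C y))
    (u v : ι → ℝ) :
    C u ≤ C v + N (u - v) := by
  obtain ⟨β, hβ, hβv⟩ := (hC v).1
  have hweight : N (fun i => β i * (u - v) i) ≤ N (u - v) := by
    refine hmono _ _ fun i => ?_
    obtain ⟨hβ0, hβ1⟩ := mem_Icc_of_mem_stdSimplex hβ i
    rw [abs_mul, abs_of_nonneg hβ0]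
    exact mul_le_of_le_one_left (abs_nonneg _) hβ1
  calc C u ≤ N (fun i => β i * u i) := (hC u).2 ⟨β, hβ, rfl⟩
    _ = N ((fun i => β i * v i) + fun i => β i * (u - v) i) := by
        congr 1; funext i; simp only [Pi.add_apply, Pi.sub_apply]; ring
    _ ≤ C v + N (u - v) := by
        rw [← hβv]; exact (htri _ _).trans (add_le_add_right hweight _)

lemma sub_le_add_of_isLeast_weighted
    (hhom : ∀ (c : ℝ) (x), N (c • x) = |c| * N x)
    (htri : ∀ x y, N (x + y) ≤ N x + N y)
    (hmono : ∀ x y : ι → ℝ, (∀ i, |x i| ≤ |y i|) → N x ≤ N y)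
    (hC : ∀ y, IsLeast ((fun β : ι → ℝ => N (fun i => β i * y i)) '' stdSimplex ℝ ι) (C y))
    {a b x y : ι → ℝ} (hxy : N x ≤ C y) :
    N a - C b ≤ N (a - x) + N (b - y) := by
  have ha : N a ≤ N (a - x) + N x := by simpa using htri (a - x) x
  have hb : C y ≤ C b + N (b - y) := by
    rw [← neg_sub, ← neg_one_smul ℝ (y - b), hhom, abs_neg, abs_one, one_mul]
    exact le_add_apply_sub_of_isLeast_weighted htri hmono hC y b
  linarith

end LoadBalancing

theorem stmt_7_general (K : ℕ) (N : (Fin K → ℝ) → ℝ)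
    (hhom : ∀ (c : ℝ) (x), N (c • x) = |c| * N x)
    (htri : ∀ x y, N (x + y) ≤ N x + N y)
    (hmono : ∀ x y : Fin K → ℝ, (∀ i, |x i| ≤ |y i|) → N x ≤ N y)
    (Cstar : (Fin K → ℝ) → ℝ)
    (hC : ∀ y, IsLeast ((fun α : Fin K → ℝ => N (fun i => α i * y i)) ''
            stdSimplex ℝ (Fin K)) (Cstar y))
    (hposhom : ∀ (c : ℝ), 0 ≤ c → ∀ y, Cstar (c • y) = c * Cstar y)
    (T : ℕ) (hT : 0 < T)
    (α : Fin T → Fin K → ℝ) (l : Fin T → Fin K → ℝ)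
    (γ : ℝ)
    (happrox : ∃ x y : Fin K → ℝ, (∀ i, x i ∈ Set.Icc (0:ℝ) 1) ∧
        (∀ i, y i ∈ Set.Icc (0:ℝ) 1) ∧ N x ≤ Cstar y ∧
        N ((1 / (T:ℝ)) • (∑ t, fun i => α t i * l t i) - x) +
          N ((1 / (T:ℝ)) • (∑ t, l t) - y) ≤ γ) :
    N (∑ t, fun i => α t i * l t i) - Cstar (∑ t, l t) ≤ (T:ℝ) * γ := by
  obtain ⟨x, y, -, -, hxy, hdist⟩ := happrox
  set A : Fin K → ℝ := ∑ t, fun i => α t i * l t i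
  set L : Fin K → ℝ := ∑ t, l t
  have hTpos : (0:ℝ) < T := by exact_mod_cast hT
  have hunscale (v : Fin K → ℝ) : (T:ℝ) • (1 / (T:ℝ)) • v = v := by
    rw [smul_smul, mul_one_div_cancel hTpos.ne', one_smul]
  have hgap : N ((1 / (T:ℝ)) • A) - Cstar ((1 / (T:ℝ)) • L) ≤ γ :=
    (sub_le_add_of_isLeast_weighted hhom htri hmono hC hxy).trans hdist
  calc N A - Cstar L
      = T * (N ((1 / (T:ℝ)) • A) - Cstar ((1 / (T:ℝ)) • L)) := by
        conv_lhs => rw [← hunscale A, ← hunscale L]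
        rw [hhom, hposhom _ hTpos.le, abs_of_pos hTpos, mul_sub]
    _ ≤ T * γ := mul_le_mul_of_nonneg_left hgap hTpos.le

/-- If the average payoff vector
`r̄_T = (1/T) ∑_t (α_t ⊙ l_t, l_t)` is within distance `γ(T)` (in the combined
norm `‖x‖ + ‖y‖`) of the target set
`S = {(x,y) ∈ [0,1]^K × [0,1]^K : N x ≤ C*(y)}`, then the load-balancing regret
satisfies `N (∑_t α_t ⊙ l_t) − C*(∑_t l_t) ≤ T·γ(T)`. -/
theorem stmt_7 (K : ℕ) (N : (Fin K → ℝ) → ℝ)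
    (hzero : ∀ x, N x = 0 ↔ x = 0)
    (hhom : ∀ (c : ℝ) (x), N (c • x) = |c| * N x)
    (htri : ∀ x y, N (x + y) ≤ N x + N y)
    (hmono : ∀ x y : Fin K → ℝ, (∀ i, |x i| ≤ |y i|) → N x ≤ N y)
    (Cstar : (Fin K → ℝ) → ℝ)
    (hC : ∀ y, IsLeast ((fun α : Fin K → ℝ => N (fun i => α i * y i)) ''
            stdSimplex ℝ (Fin K)) (Cstar y))
    (hconc : ConcaveOn ℝ {y : Fin K → ℝ | ∀ i, y i ∈ Set.Icc (0:ℝ) 1} Cstar)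
    (hposhom : ∀ (c : ℝ), 0 ≤ c → ∀ y, Cstar (c • y) = c * Cstar y)
    (T : ℕ) (hT : 0 < T)
    (α : Fin T → Fin K → ℝ) (l : Fin T → Fin K → ℝ)
    (hα : ∀ t, α t ∈ stdSimplex ℝ (Fin K))
    (hl : ∀ t i, l t i ∈ Set.Icc (0:ℝ) 1)
    (γ : ℝ)
    (happrox : ∃ x y : Fin K → ℝ, (∀ i, x i ∈ Set.Icc (0:ℝ) 1) ∧
        (∀ i, y i ∈ Set.Icc (0:ℝ) 1) ∧ N x ≤ Cstar y ∧
        N ((1 / (T:ℝ)) • (∑ t, fun i => α t i * l t i) - x) +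
          N ((1 / (T:ℝ)) • (∑ t, l t) - y) ≤ γ) :
    N (∑ t, fun i => α t i * l t i) - Cstar (∑ t, l t) ≤ (T:ℝ) * γ :=
  stmt_7_general K N hhom htri hmono Cstar hC hposhom T hT α l γ happrox
end

section
/- Let x ∈ [0,1] and y ∈ (0,1]^K. Then x ≤ 1/(∑_{j=1}^K 1/y_j) if and only if there exist z_{j} ≥ 0, j = 1..K, with ∑_j z_j = x and √(4x² + (y_j − z_j)²) ≤ y_j + z_j for all j. -/
/-!
The cone constraint `√(4x² + (y - z)²) ≤ y + z` says exactly `x² ≤ y z`, because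
`(y + z)² - (y - z)² = 4 y z`. Summing `x² / y_j ≤ z_j` gives `x² ∑ 1/y_j ≤ x`, which is
`x ≤ 1 / ∑ 1/y_j`; conversely the split `z_j = x / (y_j ∑ 1/y)` of `x` proportional to `1/y_j`
makes every product `y_j z_j` equal to `x / ∑ 1/y ≥ x²`.
-/

open Finset

theorem Real.sqrt_four_mul_sq_add_sub_sq_le_add_iff {x y z : ℝ} (h : 0 ≤ y + z) :
    √(4 * x ^ 2 + (y - z) ^ 2) ≤ y + z ↔ x ^ 2 ≤ y * z := by
  rw [Real.sqrt_le_left h]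
  constructor <;> intro <;> nlinarith

theorem le_one_div_sum_one_div_iff_exists_sum_eq {ι : Type*} [Fintype ι] {x : ℝ} {y : ι → ℝ}
    (hx : 0 ≤ x) (hy : ∀ j, 0 < y j) :
    x ≤ 1 / ∑ j, 1 / y j ↔ ∃ z : ι → ℝ, (∀ j, 0 ≤ z j) ∧ ∑ j, z j = x ∧ ∀ j, x ^ 2 ≤ y j * z j := by
  rcases isEmpty_or_nonempty ι with _ | _
  · -- both sides say `x = 0`, the left one because `1 / 0 = 0`
    simp [hx.ge_iff_eq', eq_comm]
  set S := ∑ j, 1 / y j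
  have hS : 0 < S := sum_pos (fun j _ ↦ one_div_pos.2 (hy j)) univ_nonempty
  rw [le_div_iff₀ hS]
  constructor
  · intro h
    refine ⟨fun j ↦ x / (y j * S), fun j ↦ div_nonneg hx (mul_pos (hy j) hS).le, ?_, fun j ↦ ?_⟩
    · calc ∑ j, x / (y j * S) = x / S * S := by
            rw [mul_sum]
            exact sum_congr rfl fun j _ ↦ by field_simp [(hy j).ne']
        _ = x := div_mul_cancel₀ x hS.ne'
    · have hprod : y j * (x / (y j * S)) = x / S := by field_simp [(hy j).ne']
      rw [hprod, le_div_iff₀ hS]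
      nlinarith
  · rintro ⟨z, -, rfl, hz⟩
    have hsq : (∑ j, z j) ^ 2 * S ≤ ∑ j, z j := by
      rw [mul_sum]
      refine sum_le_sum fun j _ ↦ ?_
      rw [mul_one_div, div_le_iff₀ (hy j), mul_comm]
      exact hz j
    nlinarith

theorem stmt_14_general (K : ℕ) (x : ℝ) (hx : x ∈ Set.Icc (0:ℝ) 1)
    (y : Fin K → ℝ) (hy : ∀ j, y j ∈ Set.Ioc (0:ℝ) 1) :
    x ≤ 1 / (∑ j, 1 / y j) ↔
      ∃ z : Fin K → ℝ, (∀ j, 0 ≤ z j) ∧ (∑ j, z j) = x ∧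
        ∀ j, Real.sqrt (4 * x ^ 2 + (y j - z j) ^ 2) ≤ y j + z j := by
  rw [le_one_div_sum_one_div_iff_exists_sum_eq hx.1 fun j ↦ (hy j).1]
  refine exists_congr fun z ↦ and_congr_right fun hz ↦ and_congr_right fun _ ↦
    forall_congr' fun j ↦ ?_
  exact (Real.sqrt_four_mul_sq_add_sub_sq_le_add_iff (add_nonneg (hy j).1.le (hz j))).symm

/-- For `x ∈ [0,1]` and `y ∈ (0,1]^K`:
`x ≤ 1/(∑ j 1/y_j)` iff there exist `z_j ≥ 0` with `∑ j z_j = x` and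
`√(4x² + (y_j − z_j)²) ≤ y_j + z_j` for all `j`. -/
theorem stmt_14 (K : ℕ) (hK : 0 < K) (x : ℝ) (hx : x ∈ Set.Icc (0:ℝ) 1)
    (y : Fin K → ℝ) (hy : ∀ j, y j ∈ Set.Ioc (0:ℝ) 1) :
    x ≤ 1 / (∑ j, 1 / y j) ↔
      ∃ z : Fin K → ℝ, (∀ j, 0 ≤ z j) ∧ (∑ j, z j) = x ∧
        ∀ j, Real.sqrt (4 * x ^ 2 + (y j - z j) ^ 2) ≤ y j + z j :=
  stmt_14_general K x hx y hy
end

section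
/- Suppose an OCO algorithm plays w_t with ‖w_t‖_* ≤ 1 against loss functions f_t(w) = ⟨−r_t, w⟩ + h_S(w) where r_t = r(a_t, b_t), and suppose each a_t satisfies the Blackwell condition ⟨w_t, r(a_t, b)⟩ ≤ h_S(w_t) for all b ∈ B. Then the distance of the average payoff r̄_T = (1/T)∑_t r_t to the closed convex set S satisfies min_{s∈S} ‖r̄_T − s‖ ≤ (1/T)·[∑_{t=1}^T f_t(w_t) − min_{‖w‖_*≤1} ∑_{t=1}^T f_t(w)]. -/
/-!
Some `v` in the dual unit ball has `dist(x, S) ≤ ⟨v, x⟩ - h_S(v)`: separate `S` from the open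
ball of radius `dist(x, S)` around `x` by a hyperplane and rescale its normal into the dual ball.
Since `∑_t f_t(v) = -T (⟨v, r̄_T⟩ - h_S(v))`, the best loss in hindsight is at most
`-T · dist(r̄_T, S)`, while Blackwell's condition makes every `f_t(w_t)` nonnegative.
-/

open Matrix Set Finset

section FiniteDimensional

variable {E : Type*} [NormedAddCommGroup E] [NormedSpace ℝ E] [FiniteDimensional ℝ E]

theorem Seminorm.continuous_of_finiteDimensional (p : Seminorm ℝ E) : Continuous p :=
  p.convexOn.locallyLipschitz.continuous

theorem Seminorm.exists_pos_mul_norm_le (p : Seminorm ℝ E) (hp : ∀ x, p x = 0 → x = 0) :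
    ∃ m > 0, ∀ x, m * ‖x‖ ≤ p x := by
  cases subsingleton_or_nontrivial E with
  | inl _ => exact ⟨1, one_pos, fun x => by simp [Subsingleton.elim x 0]⟩
  | inr _ =>
    -- `p` attains a positive minimum on the unit sphere of `‖·‖`.
    obtain ⟨x₀, hx₀, hmin⟩ := (isCompact_sphere (0 : E) 1).exists_isMinOn
      (NormedSpace.sphere_nonempty.2 zero_le_one) p.continuous_of_finiteDimensional.continuousOn
    have hx₀ : ‖x₀‖ = 1 := by simpa using hx₀
    refine ⟨p x₀, (apply_nonneg p x₀).lt_of_ne' fun h => by simp [hp x₀ h] at hx₀, fun x => ?_⟩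
    rcases eq_or_ne x 0 with rfl | hx
    · simp
    · have hle : p x₀ ≤ ‖x‖⁻¹ * p x := by
        simpa [map_smul_eq_mul] using hmin (a := ‖x‖⁻¹ • x) (by simp [norm_smul, hx])
      rwa [le_inv_mul_iff₀ (norm_pos_iff.2 hx), mul_comm] at hle

theorem Seminorm.isCompact_closedBall_zero (p : Seminorm ℝ E) (hp : ∀ x, p x = 0 → x = 0)
    (r : ℝ) : IsCompact (p.closedBall 0 r) := by
  obtain ⟨m, hm, hpm⟩ := p.exists_pos_mul_norm_le hp
  refine Metric.isCompact_of_isClosed_isBounded ?_ ?_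
  · simpa [Seminorm.closedBall_zero_eq] using
      isClosed_le p.continuous_of_finiteDimensional continuous_const
  · refine isBounded_iff_forall_norm_le.2 ⟨r / m, fun x hx => ?_⟩
    rw [le_div_iff₀ hm, mul_comm]
    exact (hpm x).trans (p.mem_closedBall_zero.1 hx)

end FiniteDimensional

section DualNorm

variable {ι : Type*} [Fintype ι]

noncomputable def dualNorm (N : (ι → ℝ) → ℝ) (v : ι → ℝ) : ℝ :=
  sSup {u : ℝ | ∃ z : ι → ℝ, N z ≤ 1 ∧ u = v ⬝ᵥ z}

noncomputable def supportFunction (S : Set (ι → ℝ)) (v : ι → ℝ) : ℝ :=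
  sSup ((· ⬝ᵥ v) '' S)

theorem le_dualNorm {p : Seminorm ℝ (ι → ℝ)} (hp : ∀ x, p x = 0 → x = 0) (v : ι → ℝ)
    {z : ι → ℝ} (hz : p z ≤ 1) : v ⬝ᵥ z ≤ dualNorm p v := by
  refine le_csSup ?_ ⟨z, hz, rfl⟩
  obtain ⟨c, hc⟩ := ((p.isCompact_closedBall_zero hp 1).image
    (continuous_const.dotProduct continuous_id)).bddAbove
  exact ⟨c, fun _ ⟨z, hz, hu⟩ => hu ▸ hc ⟨z, p.mem_closedBall_zero.2 hz, rfl⟩⟩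

theorem dualNorm_le (p : Seminorm ℝ (ι → ℝ)) {v : ι → ℝ} {c : ℝ}
    (h : ∀ z, p z ≤ 1 → v ⬝ᵥ z ≤ c) : dualNorm p v ≤ c :=
  csSup_le ⟨0, 0, by simp⟩ fun _ ⟨z, hz, hu⟩ => hu ▸ h z hz

theorem dotProduct_le_dualNorm_mul {p : Seminorm ℝ (ι → ℝ)} (hp : ∀ x, p x = 0 → x = 0)
    (v x : ι → ℝ) : v ⬝ᵥ x ≤ dualNorm p v * p x := by
  rcases (apply_nonneg p x).eq_or_lt' with hx | hx
  · simp [hp x hx]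
  · have := le_dualNorm hp v (z := (p x)⁻¹ • x)
      (by simp [map_smul_eq_mul, abs_of_pos hx, hx.ne'])
    rwa [dotProduct_smul, smul_eq_mul, inv_mul_le_iff₀ hx, mul_comm] at this

variable {S : Set (ι → ℝ)}

theorem le_supportFunction (hS : IsCompact S) {s : ι → ℝ} (hs : s ∈ S) (v : ι → ℝ) :
    s ⬝ᵥ v ≤ supportFunction S v :=
  le_csSup (hS.image (continuous_id.dotProduct continuous_const)).bddAbove ⟨s, hs, rfl⟩

theorem supportFunction_le (hS : S.Nonempty) {v : ι → ℝ} {c : ℝ}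
    (h : ∀ s ∈ S, s ⬝ᵥ v ≤ c) : supportFunction S v ≤ c :=
  csSup_le (hS.image _) (forall_mem_image.2 h)

theorem supportFunction_smul_le (hSne : S.Nonempty) (hS : IsCompact S) {t : ℝ} (ht : 0 ≤ t)
    (v : ι → ℝ) : supportFunction S (t • v) ≤ t * supportFunction S v :=
  supportFunction_le hSne fun s hs => by
    rw [dotProduct_smul, smul_eq_mul]
    exact mul_le_mul_of_nonneg_left (le_supportFunction hS hs v) ht

theorem exists_dualNorm_le_one_sInf_le (p : Seminorm ℝ (ι → ℝ)) (hSne : S.Nonempty)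
    (hS : IsCompact S) (hSconv : Convex ℝ S) (x : ι → ℝ) :
    ∃ v, dualNorm p v ≤ 1 ∧
      sInf ((fun s => p (x - s)) '' S) ≤ v ⬝ᵥ x - supportFunction S v := by
  classical
  set D := sInf ((fun s => p (x - s)) '' S)
  rcases le_or_gt D 0 with hD | hD
  · refine ⟨0, dualNorm_le p fun z _ => by simp, ?_⟩
    have : supportFunction S 0 ≤ 0 := supportFunction_le hSne fun s _ => by simp
    simp only [zero_dotProduct]
    linarith
  have hDle : ∀ s ∈ S, D ≤ p (x - s) := fun s hs =>
    csInf_le ⟨0, forall_mem_image.2 fun _ _ => apply_nonneg _ _⟩ ⟨s, hs, rfl⟩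
  have hdisj : Disjoint (p.ball x D) S := disjoint_left.2 fun s hs hsS =>
    (hDle s hsS).not_gt (by rwa [Seminorm.mem_ball, map_sub_rev] at hs)
  have hopen : IsOpen (p.ball x D) :=
    isOpen_lt (p.continuous_of_finiteDimensional.comp (continuous_sub_right x)) continuous_const
  obtain ⟨f, c, hf_ball, hf_S⟩ :=
    geometric_hahn_banach_open (p.convex_ball x D) hopen hSconv hdisj
  set g := (dotProductEquiv ℝ ι).symm f.toLinearMap
  have hg : ∀ y, g ⬝ᵥ y = f y := fun y =>
    LinearMap.congr_fun ((dotProductEquiv ℝ ι).apply_symm_apply f.toLinearMap) y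
  set M := c - f x
  have hM : 0 < M := sub_pos.2 (hf_ball x (p.mem_ball_self hD))
  have hsupp : supportFunction S (-g) ≤ -c := supportFunction_le hSne fun s hs => by
    rw [dotProduct_neg, dotProduct_comm, hg]
    linarith [hf_S s hs]
  -- The points `x - (D / ε) • z` with `p z ≤ 1 < ε` lie in the open ball.
  have hball : ∀ z, p z ≤ 1 → D * ((-g) ⬝ᵥ z) ≤ M := fun z hz =>
    (le_iff_forall_one_lt_le_mul₀ hM.le).2 fun ε hε => by
      have hε₀ : 0 < ε := one_pos.trans hε
      have hmem : x - (D / ε) • z ∈ p.ball x D := by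
        rw [Seminorm.mem_ball, sub_sub_cancel_left, map_neg_eq_map, map_smul_eq_mul,
          Real.norm_of_nonneg (by positivity)]
        calc D / ε * p z ≤ D / ε := mul_le_of_le_one_right (by positivity) hz
          _ < D := div_lt_self hD hε
      have := hf_ball _ hmem
      rw [map_sub, map_smul, smul_eq_mul, ← hg z] at this
      have key : -(D * (g ⬝ᵥ z)) / ε < M := by
        rw [neg_div, mul_div_right_comm]
        linarith
      rw [neg_dotProduct, mul_neg]
      exact ((div_lt_iff₀ hε₀).1 key).le
  refine ⟨(D / M) • -g, dualNorm_le p fun z hz => ?_, ?_⟩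
  · rw [smul_dotProduct, smul_eq_mul, div_mul_eq_mul_div, div_le_one hM]
    exact hball z hz
  · have hgx : M ≤ (-g) ⬝ᵥ x - supportFunction S (-g) := by
      rw [neg_dotProduct, hg]
      linarith
    calc D = D / M * M := (div_mul_cancel₀ D hM.ne').symm
      _ ≤ D / M * ((-g) ⬝ᵥ x - supportFunction S (-g)) := by gcongr
      _ ≤ ((D / M) • -g) ⬝ᵥ x - supportFunction S ((D / M) • -g) := by
        rw [smul_dotProduct, smul_eq_mul, mul_sub]
        gcongr
        exact supportFunction_smul_le hSne hS (by positivity) _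

noncomputable def approachabilityLoss (S : Set (ι → ℝ)) (y v : ι → ℝ) : ℝ :=
  (-y) ⬝ᵥ v + supportFunction S v

theorem approachabilityLoss_nonneg {y v : ι → ℝ} (h : v ⬝ᵥ y ≤ supportFunction S v) :
    0 ≤ approachabilityLoss S y v := by
  rw [approachabilityLoss, neg_dotProduct, dotProduct_comm]
  linarith

theorem neg_le_approachabilityLoss {p : Seminorm ℝ (ι → ℝ)} (hp : ∀ x, p x = 0 → x = 0)
    (hS : IsCompact S) {s : ι → ℝ} (hs : s ∈ S) {v : ι → ℝ} (hv : dualNorm p v ≤ 1)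
    (y : ι → ℝ) : -p (y - s) ≤ approachabilityLoss S y v := by
  have hHolder : v ⬝ᵥ (y - s) ≤ p (y - s) :=
    (dotProduct_le_dualNorm_mul hp v _).trans (mul_le_of_le_one_left (apply_nonneg _ _) hv)
  have := le_supportFunction hS hs v
  rw [dotProduct_sub, dotProduct_comm v s] at hHolder
  rw [approachabilityLoss, neg_dotProduct, dotProduct_comm]
  linarith

theorem sum_approachabilityLoss {T : ℕ} (y : Fin T → ι → ℝ) (v : ι → ℝ) :
    ∑ t, approachabilityLoss S (y t) v =
      -(T * (v ⬝ᵥ ((1 / (T : ℝ)) • ∑ t, y t) - supportFunction S v)) := by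
  rcases Nat.eq_zero_or_pos T with rfl | hT
  · simp
  · have hT' : (T : ℝ) ≠ 0 := by positivity
    simp only [approachabilityLoss, sum_add_distrib, neg_dotProduct, sum_neg_distrib,
      ← sum_dotProduct, sum_const, card_univ, Fintype.card_fin, nsmul_eq_mul, dotProduct_comm v,
      smul_dotProduct, smul_eq_mul, one_div]
    rw [mul_sub, ← mul_assoc, mul_inv_cancel₀ hT', one_mul]
    ring

theorem sInf_seminorm_sub_le_regret (p : Seminorm ℝ (ι → ℝ)) (hp : ∀ x, p x = 0 → x = 0)
    (hSne : S.Nonempty) (hS : IsCompact S) (hSconv : Convex ℝ S) {T : ℕ} (hT : 0 < T)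
    (y w : Fin T → ι → ℝ) (hw : ∀ t, w t ⬝ᵥ y t ≤ supportFunction S (w t)) :
    sInf ((fun s => p ((1 / (T : ℝ)) • ∑ t, y t - s)) '' S) ≤
      (1 / (T : ℝ)) * (∑ t, approachabilityLoss S (y t) (w t) -
        sInf ((fun v => ∑ t, approachabilityLoss S (y t) v) '' {v | dualNorm p v ≤ 1})) := by
  obtain ⟨s₀, hs₀⟩ := hSne
  obtain ⟨v, hv, hD⟩ :=
    exists_dualNorm_le_one_sInf_le p ⟨s₀, hs₀⟩ hS hSconv ((1 / (T : ℝ)) • ∑ t, y t)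
  have hbdd :
      BddBelow ((fun v => ∑ t, approachabilityLoss S (y t) v) '' {v | dualNorm p v ≤ 1}) :=
    ⟨∑ t, -p (y t - s₀), forall_mem_image.2 fun v hv =>
      sum_le_sum fun t _ => neg_le_approachabilityLoss hp hS hs₀ hv (y t)⟩
  have hopt := (csInf_le hbdd ⟨v, hv, rfl⟩).trans_eq (sum_approachabilityLoss y v)
  have hreg : 0 ≤ ∑ t, approachabilityLoss S (y t) (w t) :=
    sum_nonneg fun t _ => approachabilityLoss_nonneg (hw t)
  have hT' : (0 : ℝ) < T := Nat.cast_pos.2 hT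
  rw [one_div_mul_eq_div, le_div_iff₀ hT']
  nlinarith [mul_le_mul_of_nonneg_left hD hT'.le]

end DualNorm

theorem stmt_16_general (d : ℕ) (N : (Fin d → ℝ) → ℝ)
    (hzero : ∀ x, N x = 0 ↔ x = 0)
    (hhom : ∀ (c : ℝ) (x), N (c • x) = |c| * N x)
    (htri : ∀ x y, N (x + y) ≤ N x + N y)
    -- dual norm
    (Nd : (Fin d → ℝ) → ℝ)
    (hNd : ∀ v, Nd v = sSup {u : ℝ | ∃ z : Fin d → ℝ, N z ≤ 1 ∧ u = ∑ i, v i * z i})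
    -- target set and its support function
    (S : Set (Fin d → ℝ)) (hSne : S.Nonempty) (hScomp : IsCompact S)
    (hSconv : Convex ℝ S)
    (hS : (Fin d → ℝ) → ℝ)
    (hhS : ∀ v, hS v = sSup ((fun s => ∑ i, s i * v i) '' S))
    -- the game
    {A B : Type} (r : A → B → (Fin d → ℝ))
    (T : ℕ) (hT : 0 < T) (a : Fin T → A) (b : Fin T → B)
    (w : Fin T → Fin d → ℝ)
    (hBlackwell : ∀ t, ∀ bb : B, (∑ i, w t i * r (a t) bb i) ≤ hS (w t)) :
    sInf ((fun s => N ((1 / (T:ℝ)) • (∑ t, r (a t) (b t)) - s)) '' S) ≤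
      (1 / (T:ℝ)) *
        ((∑ t, ((∑ i, (-(r (a t) (b t) i)) * w t i) + hS (w t))) -
          sInf ((fun v => ∑ t, ((∑ i, (-(r (a t) (b t) i)) * v i) + hS v)) ''
            {v : Fin d → ℝ | Nd v ≤ 1})) := by
  obtain ⟨p, rfl⟩ : ∃ p : Seminorm ℝ (Fin d → ℝ), ⇑p = N :=
    ⟨Seminorm.of N htri fun c x => by rw [hhom, Real.norm_eq_abs], rfl⟩
  obtain rfl : Nd = dualNorm p := funext hNd
  obtain rfl : hS = supportFunction S := funext hhS
  exact sInf_seminorm_sub_le_regret p (fun x => (hzero x).1) hSne hScomp hSconv hT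
    (fun t => r (a t) (b t)) w fun t => hBlackwell t (b t)

/-- If an OCO algorithm plays `w_t` in the dual unit ball against
losses `f_t(w) = ⟨−r_t, w⟩ + h_S(w)` with `r_t = r(a_t,b_t)`, and each `a_t`
satisfies the Blackwell condition `⟨w_t, r(a_t,b)⟩ ≤ h_S(w_t)` for all `b`,
then the distance of the average payoff to `S` is at most `(1/T)` times the
OCO regret. -/
theorem stmt_16 (d : ℕ) (N : (Fin d → ℝ) → ℝ)
    (hzero : ∀ x, N x = 0 ↔ x = 0)
    (hhom : ∀ (c : ℝ) (x), N (c • x) = |c| * N x)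
    (htri : ∀ x y, N (x + y) ≤ N x + N y)
    -- dual norm
    (Nd : (Fin d → ℝ) → ℝ)
    (hNd : ∀ v, Nd v = sSup {u : ℝ | ∃ z : Fin d → ℝ, N z ≤ 1 ∧ u = ∑ i, v i * z i})
    -- target set and its support function
    (S : Set (Fin d → ℝ)) (hSne : S.Nonempty) (hScomp : IsCompact S)
    (hSconv : Convex ℝ S)
    (hS : (Fin d → ℝ) → ℝ)
    (hhS : ∀ v, hS v = sSup ((fun s => ∑ i, s i * v i) '' S))
    -- the game
    {A B : Type} (r : A → B → (Fin d → ℝ))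
    (T : ℕ) (hT : 0 < T) (a : Fin T → A) (b : Fin T → B)
    (w : Fin T → Fin d → ℝ) (hwball : ∀ t, Nd (w t) ≤ 1)
    (hBlackwell : ∀ t, ∀ bb : B, (∑ i, w t i * r (a t) bb i) ≤ hS (w t)) :
    sInf ((fun s => N ((1 / (T:ℝ)) • (∑ t, r (a t) (b t)) - s)) '' S) ≤
      (1 / (T:ℝ)) *
        ((∑ t, ((∑ i, (-(r (a t) (b t) i)) * w t i) + hS (w t))) -
          sInf ((fun v => ∑ t, ((∑ i, (-(r (a t) (b t) i)) * v i) + hS v)) ''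
            {v : Fin d → ℝ | Nd v ≤ 1})) :=
  stmt_16_general d N hzero hhom htri Nd hNd S hSne hScomp hSconv hS hhS r T hT a b w hBlackwell
end

section
/- For y ∈ (0,1]^K and p > 1, the minimizer of ‖α ⊙ y‖_p over α ∈ Δ(K) is α_i = y_i^{−p/(p−1)} / ∑_j y_j^{−p/(p−1)}, and the minimum value equals (∑_{i=1}^K y_i^{−p/(p−1)})^{−(p−1)/p}. -/
/-!
Hölder's inequality for the conjugate exponents `p` and `q = p / (p - 1)`, applied to `α ⊙ y`
and `y⁻¹`, gives `1 = ∑ αᵢ ≤ ‖α ⊙ y‖_p · (∑ yᵢ^(-q))^(1/q)`. The bound is attained at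
`αᵢ ∝ yᵢ^(-q)`, where `|αᵢ yᵢ|^p ∝ yᵢ^(-q) = |yᵢ⁻¹|^q` is Hölder's equality case.
-/

open Finset Real

variable {ι : Type*} [Fintype ι]

theorem div_sum_mem_stdSimplex [Nonempty ι] {w : ι → ℝ} (hw : ∀ i, 0 < w i) :
    (fun i ↦ w i / ∑ j, w j) ∈ stdSimplex ℝ ι := by
  have hS : 0 < ∑ j, w j := sum_pos (fun i _ ↦ hw i) univ_nonempty
  refine ⟨fun i ↦ (div_pos (hw i) hS).le, ?_⟩
  rw [← sum_div, div_self hS.ne']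

section HolderConjugate

variable {p q : ℝ} {y : ι → ℝ}

theorem sum_rpow_neg_rpow_le_of_mem_stdSimplex (hpq : p.HolderConjugate q) (hy : ∀ i, 0 < y i)
    {α : ι → ℝ} (hα : α ∈ stdSimplex ℝ ι) :
    (∑ i, y i ^ (-q)) ^ (-(1 / q)) ≤ (∑ i, |α i * y i| ^ p) ^ (1 / p) := by
  have holder := inner_le_Lp_mul_Lq univ (fun i ↦ α i * y i) (fun i ↦ (y i)⁻¹) hpq
  have pairing : ∑ i, α i * y i * (y i)⁻¹ = 1 := by
    rw [← hα.2]
    exact sum_congr rfl fun i _ ↦ mul_inv_cancel_right₀ (hy i).ne' (α i)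
  have dual_norm : ∑ i, |(y i)⁻¹| ^ q = ∑ i, y i ^ (-q) := by
    refine sum_congr rfl fun i _ ↦ ?_
    rw [abs_of_pos (inv_pos.mpr (hy i)), inv_rpow (hy i).le, rpow_neg (hy i).le]
  rw [pairing, dual_norm] at holder
  have hS : 0 < ∑ i, y i ^ (-q) := by
    obtain ⟨i, -, -⟩ := exists_ne_zero_of_sum_ne_zero (hα.2.symm ▸ one_ne_zero)
    exact sum_pos (fun i _ ↦ rpow_pos_of_pos (hy i) _) ⟨i, mem_univ i⟩
  rwa [rpow_neg hS.le, inv_le_iff_one_le_mul₀ (rpow_pos_of_pos hS _)]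

theorem sum_abs_div_sum_mul_rpow_eq (hpq : p.HolderConjugate q) [Nonempty ι]
    (hy : ∀ i, 0 < y i) :
    (∑ i, |y i ^ (-q) / (∑ j, y j ^ (-q)) * y i| ^ p) ^ (1 / p) =
      (∑ i, y i ^ (-q)) ^ (-(1 / q)) := by
  set S := ∑ j, y j ^ (-q)
  have hS : 0 < S := sum_pos (fun i _ ↦ rpow_pos_of_pos (hy i) _) univ_nonempty
  -- `(1 - q) p = -q` is the identity `p q = p + q` of conjugate exponents.
  have term : ∀ i, |y i ^ (-q) / S * y i| ^ p = y i ^ (-q) / S ^ p := by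
    intro i
    have hyi := hy i
    rw [div_mul_eq_mul_div, ← rpow_add_one hyi.ne', abs_of_pos (by positivity),
      div_rpow (by positivity) hS.le, ← rpow_mul hyi.le]
    congr 2
    linear_combination -hpq.mul_eq_add
  rw [sum_congr rfl fun i _ ↦ term i, ← sum_div, div_eq_mul_inv, ← rpow_neg hS.le,
    ← rpow_one_add' hS.le (by linarith [hpq.lt]), ← rpow_mul hS.le]
  congr 1
  have := hpq.inv_add_inv_eq_one
  field_simp [hpq.ne_zero, hpq.symm.ne_zero] at this ⊢
  linarith

end HolderConjugate

/-- For `y ∈ (0,1]^K` and `p > 1`, the minimizer of `‖α ⊙ y‖_p`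
over the simplex is `α_i = y_i^(−p/(p−1)) / ∑_j y_j^(−p/(p−1))`, with minimum
value `(∑_i y_i^(−p/(p−1)))^(−(p−1)/p)`. -/
theorem stmt_18 (K : ℕ) (hK : 0 < K) (y : Fin K → ℝ)
    (hy : ∀ i, y i ∈ Set.Ioc (0:ℝ) 1) (p : ℝ) (hp : 1 < p) :
    let q : ℝ := p / (p - 1)
    let αopt : Fin K → ℝ := fun i => y i ^ (-q) / ∑ j, y j ^ (-q)
    αopt ∈ stdSimplex ℝ (Fin K) ∧
      (∑ i, |αopt i * y i| ^ p) ^ (1 / p) =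
        (∑ i, y i ^ (-q)) ^ (-(p - 1) / p) ∧
      ∀ α ∈ stdSimplex ℝ (Fin K),
        (∑ i, y i ^ (-q)) ^ (-(p - 1) / p) ≤ (∑ i, |α i * y i| ^ p) ^ (1 / p) := by
  intro q αopt
  have hpq : p.HolderConjugate q := (holderConjugate_iff_eq_conjExponent hp).mpr rfl
  have : Nonempty (Fin K) := Fin.pos_iff_nonempty.mp hK
  have hy₀ : ∀ i, 0 < y i := fun i ↦ (hy i).1
  have exponent : -(p - 1) / p = -(1 / q) := by
    rw [one_div, ← hpq.inv_sub_one]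
    field_simp [hpq.ne_zero]
    ring
  rw [exponent]
  exact ⟨div_sum_mem_stdSimplex fun i ↦ rpow_pos_of_pos (hy₀ i) _,
    sum_abs_div_sum_mul_rpow_eq hpq hy₀,
    fun α hα ↦ sum_rpow_neg_rpow_le_of_mem_stdSimplex hpq hy₀ hα⟩
end
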